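/- Let 𝒱 be a spraid and let f be a trail morphism from 𝒱 to σ_ℝ. Then there is a refinement morphism g from 𝒱 to σ_ℝ such that f(x) ≡_ℝ g(x) for all points x of 𝒱. -/

import Mathlib

/-! # Natural Topology: basic framework (Waaldijk) -/

/-- A pre-natural space: a countable set of basic dots with a decidable
pre-apartness `apart` and a decidable refinement partial order `refines`. -/
structure PreNaturalSpace (V : Type) : Type where
  countable' : Countable V
  apart : V → V → Prop
  refines : V → V → Prop
  apart_dec : DecidableRel apart
  refines_dec : DecidableRel refines
  apart_symm : ∀ a b, apart a b → apart b a
  apart_irrefl : ∀ a, ¬ apart a a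
  apart_mono : ∀ a b c, refines a b → apart c b → apart c a
  refines_refl : ∀ a, refines a a
  refines_trans : ∀ a b c, refines a b → refines b c → refines a c
  refines_antisymm : ∀ a b, refines a b → refines b a → a = b

namespace PreNaturalSpace

variable {V W : Type}

/-- `a ≺ b` : strict refinement. -/
def strict (P : PreNaturalSpace V) (a b : V) : Prop := P.refines a b ∧ a ≠ b

/-- A point is a shrinking sequence of dots deciding every apart pair of dots. -/
structure IsPoint (P : PreNaturalSpace V) (p : ℕ → V) : Prop where
  mono : ∀ n, P.refines (p (n + 1)) (p n)
  shrink : ∀ n, ∃ m, P.strict (p m) (p n)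
  decides : ∀ a b, P.apart a b → ∃ m, P.apart (p m) a ∨ P.apart (p m) b

/-- The set of points of a pre-natural space. -/
def Pt (P : PreNaturalSpace V) : Type := { p : ℕ → V // P.IsPoint p }

/-- `p` begins with the dot `a` : some `p m ≺ a`. -/
def begins (P : PreNaturalSpace V) (p : ℕ → V) (a : V) : Prop := ∃ m, P.strict (p m) a

/-- Apartness between a dot and a point. -/
def dApart (P : PreNaturalSpace V) (a : V) (p : ℕ → V) : Prop := ∃ m, P.apart (p m) a

/-- Apartness between points. -/
def pApart (P : PreNaturalSpace V) (p q : P.Pt) : Prop := ∃ n, P.apart (p.1 n) (q.1 n)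

/-- Equivalence of points: the negation of apartness. -/
def pEquiv (P : PreNaturalSpace V) (p q : P.Pt) : Prop := ¬ P.pApart p q

variable (P : PreNaturalSpace V)

lemma refines_of_le {p : ℕ → V} (hp : ∀ n, P.refines (p (n + 1)) (p n)) :
    ∀ {m k : ℕ}, m ≤ k → P.refines (p k) (p m) := by
  intro m k h
  induction h with
  | refl => exact P.refines_refl _
  | step h ih => exact P.refines_trans _ _ _ (hp _) ih

lemma begins_mono {z : ℕ → V} (hz : P.IsPoint z) {a b : V} (hab : P.refines a b)
    (h : P.begins z a) : P.begins z b := by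
  obtain ⟨j, hj1, hj2⟩ := h
  have hzb : P.refines (z j) b := P.refines_trans _ _ _ hj1 hab
  by_cases he : z j = b
  · obtain ⟨i, hi1, hi2⟩ := hz.shrink j
    exact ⟨i, P.refines_trans _ _ _ hi1 hzb, fun h' => hi2 (h'.trans he.symm)⟩
  · exact ⟨j, hzb, he⟩

/-- The natural (apartness) topology as a predicate on subsets of the point set. -/
def NatOpen (U : Set P.Pt) : Prop :=
  ∀ x ∈ U, ∀ y : P.Pt, P.pApart y x ∨ ∃ m, { z : P.Pt | P.begins z.1 (y.1 m) } ⊆ U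

instance instTopPt : TopologicalSpace P.Pt where
  IsOpen := P.NatOpen
  isOpen_univ := fun _ _ _ => Or.inr ⟨0, fun _ _ => trivial⟩
  isOpen_inter := by
    intro U U' hU hU' x hx y
    rcases hU x hx.1 y with h | ⟨m, hm⟩
    · exact Or.inl h
    rcases hU' x hx.2 y with h | ⟨k, hk⟩
    · exact Or.inl h
    refine Or.inr ⟨max m k, fun z hz => ⟨hm ?_, hk ?_⟩⟩
    · exact P.begins_mono z.2 (P.refines_of_le y.2.mono (le_max_left m k)) hz
    · exact P.begins_mono z.2 (P.refines_of_le y.2.mono (le_max_right m k)) hz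
  isOpen_sUnion := by
    intro S hS x hx y
    obtain ⟨U, hU, hxU⟩ := hx
    rcases hS U hU x hxU y with h | ⟨m, hm⟩
    · exact Or.inl h
    · exact Or.inr ⟨m, fun z hz => ⟨U, hU, hm hz⟩⟩

lemma pEquiv_refl (p : P.Pt) : P.pEquiv p p := fun ⟨_, h⟩ => P.apart_irrefl _ h

lemma pEquiv_symm {p q : P.Pt} (h : P.pEquiv p q) : P.pEquiv q p :=
  fun ⟨n, hn⟩ => h ⟨n, P.apart_symm _ _ hn⟩

lemma pEquiv_trans {p q r : P.Pt} (hpq : P.pEquiv p q) (hqr : P.pEquiv q r) :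
    P.pEquiv p r := by
  rintro ⟨n, hn⟩
  obtain ⟨m, hm⟩ := q.2.decides (p.1 n) (r.1 n) hn
  rcases hm with hm | hm
  · -- q.1 m apart from p.1 n
    refine hpq ⟨max m n, ?_⟩
    have h1 : P.apart (p.1 n) (q.1 (max m n)) :=
      P.apart_mono _ _ _ (P.refines_of_le q.2.mono (le_max_left m n)) (P.apart_symm _ _ hm)
    have h2 : P.apart (q.1 (max m n)) (p.1 (max m n)) :=
      P.apart_mono _ _ _ (P.refines_of_le p.2.mono (le_max_right m n)) (P.apart_symm _ _ h1)
    exact P.apart_symm _ _ h2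
  · refine hqr ⟨max m n, ?_⟩
    have h1 : P.apart (r.1 n) (q.1 (max m n)) :=
      P.apart_mono _ _ _ (P.refines_of_le q.2.mono (le_max_left m n)) (P.apart_symm _ _ hm)
    exact P.apart_mono _ _ _ (P.refines_of_le r.2.mono (le_max_right m n))
      (P.apart_symm _ _ h1)

/-- The setoid of points modulo `≡`. -/
def ptSetoid : Setoid P.Pt :=
  ⟨P.pEquiv, ⟨P.pEquiv_refl, P.pEquiv_symm, P.pEquiv_trans⟩⟩

/-- `â` : the set of points beginning with the dot `a`. -/
def hatSet (a : V) : Set P.Pt := { p | P.begins p.1 a }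

/-- `ā` : the `≡`-closure of `â`. -/
def barSet (a : V) : Set P.Pt := { p | ∃ q : P.Pt, P.begins q.1 a ∧ P.pEquiv p q }

/-- A natural space is basic-open when every `ā` is open. -/
def BasicOpen : Prop := ∀ a : V, IsOpen (P.barSet a)

/-- Existence of a maximal dot. -/
def HasMaxDot : Prop := ∃ m, ∀ a, P.refines a m

/-- Every basic dot begins at least one point. -/
def AllDotsInhabited : Prop := ∀ a : V, ∃ p : ℕ → V, P.IsPoint p ∧ P.begins p a

/-- The conditions making the point set of a pre-natural space a natural space. -/
def IsNaturalSpace : Prop := P.HasMaxDot ∧ P.AllDotsInhabited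

end PreNaturalSpace

/-- A refinement morphism between (pre-)natural spaces: a map on dots sending
points to points and reflecting apartness of points. -/
structure RefMorphism {V W : Type} (P : PreNaturalSpace V) (Q : PreNaturalSpace W) : Type where
  toFun : V → W
  maps_points : ∀ p : ℕ → V, P.IsPoint p → Q.IsPoint (fun n => toFun (p n))
  reflects_apart : ∀ p q : ℕ → V, P.IsPoint p → P.IsPoint q →
    (∃ n, Q.apart (toFun (p n)) (toFun (q n))) → ∃ n, P.apart (p n) (q n)

/-- The induced map on points of a refinement morphism. -/
def RefMorphism.pointMap {V W : Type} {P : PreNaturalSpace V} {Q : PreNaturalSpace W}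
    (f : RefMorphism P Q) (p : P.Pt) : Q.Pt :=
  ⟨fun n => f.toFun (p.1 n), f.maps_points p.1 p.2⟩

namespace PreNaturalSpace

variable {V W : Type} (P : PreNaturalSpace V)

/-- Restriction of a pre-natural space to a subset of dots. -/
noncomputable def restrict (S : Set V) : PreNaturalSpace S where
  countable' := by haveI := P.countable'; exact inferInstance
  apart a b := P.apart a.1 b.1
  refines a b := P.refines a.1 b.1
  apart_dec := Classical.decRel _
  refines_dec := Classical.decRel _
  apart_symm _ _ h := P.apart_symm _ _ h
  apart_irrefl a := P.apart_irrefl a.1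
  apart_mono _ _ _ h1 h2 := P.apart_mono _ _ _ h1 h2
  refines_refl a := P.refines_refl a.1
  refines_trans _ _ _ h1 h2 := P.refines_trans _ _ _ h1 h2
  refines_antisymm _ _ h1 h2 := Subtype.ext (P.refines_antisymm _ _ h1 h2)

/-! ## Trail spaces -/

/-- A `≺`-trail: a finite strictly refining sequence `a₀ ≻ a₁ ≻ …`. -/
def Trail : Type := { l : List V // l.Chain' fun a b => P.strict b a }

lemma strict_trans_flip : Transitive (fun a b : V => P.strict b a) := by
  rintro a b c ⟨h1, h1'⟩ ⟨h2, h2'⟩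
  refine ⟨P.refines_trans _ _ _ h2 h1, fun he => ?_⟩
  exact h2' (P.refines_antisymm _ _ h2 (he ▸ h1))

lemma last_refines_of_prefix {a b : List V}
    (ha : a.Chain' fun x y => P.strict y x) (hpre : b <+: a)
    {x y : V} (hx : x ∈ a.getLast?) (hy : y ∈ b.getLast?) :
    P.refines x y := by
  haveI : IsTrans V (fun x y : V => P.strict y x) := ⟨fun _ _ _ h1 h2 => P.strict_trans_flip h1 h2⟩
  have hpw : a.Pairwise fun x y => P.strict y x := List.isChain_iff_pairwise.mp ha
  obtain ⟨t, rfl⟩ := hpre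
  rcases eq_or_ne t [] with rfl | ht
  · rw [List.append_nil] at hx
    have : x = y := by
      rw [Option.mem_def] at hx hy
      exact Option.some_injective _ (hx ▸ hy ▸ rfl)
    exact this ▸ P.refines_refl x
  · rw [List.getLast?_append_of_ne_nil _ ht] at hx
    have hxt : x ∈ t := List.mem_of_mem_getLast? hx
    have hyb : y ∈ b := List.mem_of_mem_getLast? hy
    have := (List.pairwise_append.mp hpw).2.2 y hyb x hxt
    exact this.1

/-- The trail space of a pre-natural space: dots are `≺`-trails, with
`a ⊑* b` iff `b` is an initial segment of `a`, and `a #* b` iff the last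
dots of `a` and `b` are apart. -/
noncomputable def trailSpace : PreNaturalSpace P.Trail where
  countable' := by haveI := P.countable'; exact inferInstanceAs (Countable
    { l : List V // l.Chain' fun a b => P.strict b a })
  apart a b := ∃ x ∈ a.1.getLast?, ∃ y ∈ b.1.getLast?, P.apart x y
  refines a b := b.1 <+: a.1
  apart_dec := Classical.decRel _
  refines_dec := Classical.decRel _
  apart_symm := by
    rintro a b ⟨x, hx, y, hy, hxy⟩
    exact ⟨y, hy, x, hx, P.apart_symm _ _ hxy⟩
  apart_irrefl := by
    rintro a ⟨x, hx, y, hy, hxy⟩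
    rw [Option.mem_def] at hx hy
    have : x = y := Option.some_injective _ (hx ▸ hy ▸ rfl)
    exact P.apart_irrefl x (this ▸ hxy)
  apart_mono := by
    rintro a b c hab ⟨x, hx, y, hy, hxy⟩
    have hbne : b.1 ≠ [] := by
      intro h
      rw [h] at hy
      simp at hy
    have hane : a.1 ≠ [] := by
      intro h
      exact hbne (List.prefix_nil.mp (h ▸ hab))
    obtain ⟨z, hz⟩ : ∃ z, z ∈ a.1.getLast? := by
      rcases h : a.1.getLast? with _ | z
      · exact absurd (List.getLast?_eq_none_iff.mp h) hane
      · exact ⟨z, rfl⟩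
    have hzy : P.refines z y := P.last_refines_of_prefix a.2 hab hz hy
    exact ⟨x, hx, z, hz, P.apart_mono _ _ _ hzy hxy⟩
  refines_refl a := List.prefix_refl a.1
  refines_trans _ _ _ h1 h2 := h2.trans h1
  refines_antisymm a b h1 h2 :=
    Subtype.ext (h2.eq_of_length (le_antisymm h2.length_le h1.length_le))

end PreNaturalSpace

open Classical in
/-- `p♯(n)` : the `≺`-trail obtained from `p₀, …, p_{n-1}` by deleting repetitions
(for a shrinking sequence `p`, repetitions are consecutive). -/
noncomputable def segList {V : Type} (p : ℕ → V) : ℕ → List V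
  | 0 => []
  | n + 1 =>
    if (segList p n).getLast? = some (p n) then segList p n
    else segList p n ++ [p n]

namespace PreNaturalSpace

variable {V W : Type} (P : PreNaturalSpace V)

/-- The map on trail dots sending a nonempty trail to its last element and
the empty trail to `m`. -/
def lastDot (m : V) (q : P.Trail) : V := q.1.getLast?.getD m

/-- `g` is the point map induced by a trail morphism `f` (a refinement morphism
on the trail space): `g p = f (p♯(0)), f (p♯(1)), …`. -/
def InducedByTrailMorphism (Q : PreNaturalSpace W) (f : RefMorphism P.trailSpace Q)
    (g : P.Pt → Q.Pt) : Prop :=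
  ∀ p : P.Pt, ∃ t : P.trailSpace.Pt, (∀ n, (t.1 n).1 = segList p.1 n) ∧ g p = f.pointMap t

/-- `g` is a natural morphism map: induced by a refinement morphism or by a trail morphism. -/
def IsNaturalMorphismMap (Q : PreNaturalSpace W) (g : P.Pt → Q.Pt) : Prop :=
  (∃ f : RefMorphism P Q, ∀ p, g p = f.pointMap p) ∨
  (∃ f : RefMorphism P.trailSpace Q, P.InducedByTrailMorphism Q f g)

/-- Two natural spaces are isomorphic: natural morphisms both ways, inverse up to `≡`. -/
def AreIsomorphic (Q : PreNaturalSpace W) : Prop :=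
  ∃ (f : P.Pt → Q.Pt) (g : Q.Pt → P.Pt),
    P.IsNaturalMorphismMap Q f ∧ Q.IsNaturalMorphismMap P g ∧
    (∀ x, P.pEquiv (g (f x)) x) ∧ (∀ y, Q.pEquiv (f (g y)) y)

/-- A natural space is a basic neighborhood space iff it is isomorphic to a basic-open space. -/
def IsBasicNbhdSpace : Prop :=
  ∃ (W' : Type) (Q : PreNaturalSpace W'), Q.IsNaturalSpace ∧ Q.BasicOpen ∧ P.AreIsomorphic Q

/-! ## Trees, treas, spreads, spraids, fans -/

/-- `a` is a successor of `c`. -/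
def IsSucc (a c : V) : Prop := P.strict a c ∧ ∀ b, P.strict a b → P.refines b c → b = c

/-- A successor-trail (as a list, each entry a successor of the previous one). -/
def SuccChain (l : List V) : Prop := l.Chain' fun x y => P.IsSucc y x

/-- A successor-trail from `m` to `a`. -/
def IsSuccTrailFromTo (m a : V) (l : List V) : Prop :=
  P.SuccChain l ∧ l.head? = some m ∧ l.getLast? = some a

/-- `(V,⊑)` is a tree. -/
def IsTree : Prop :=
  ∃ m, (∀ a, P.refines a m) ∧ ∀ a, ∃! l : List V, P.IsSuccTrailFromTo m a l

/-- `(V,⊑)` is a trea. -/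
def IsTrea : Prop :=
  ∃ m, (∀ a, P.refines a m) ∧ (∀ a, { b | P.refines a b }.Finite) ∧
    ∀ a, ∃ g : ℕ, ∀ l : List V, P.IsSuccTrailFromTo m a l → l.length = g

/-- Every infinite successor-trail is a point. -/
def SuccTrailsArePoints : Prop :=
  ∀ q : ℕ → V, (∀ n, P.IsSucc (q (n + 1)) (q n)) → P.IsPoint q

def IsSpread : Prop := P.IsTree ∧ P.SuccTrailsArePoints

def IsSpraid : Prop := P.IsTrea ∧ P.SuccTrailsArePoints

/-- Finitely branching: every dot has finitely many successors. -/
def FinBranching : Prop := ∀ a : V, { b | P.IsSucc b a }.Finite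

def IsFan : Prop := P.IsSpread ∧ P.FinBranching

def IsFann : Prop := P.IsSpraid ∧ P.FinBranching

end PreNaturalSpace
/-! ## The natural real numbers and the lean dyadic spraid σ_ℝ -/

/-- Basic dots for the natural reals: `none` is the maximal dot `(-∞,∞)`,
`some ⟨(p,q), _⟩` is the closed rational interval `[p,q]` with `p < q`. -/
def RDot : Type := Option { pq : ℚ × ℚ // pq.1 < pq.2 }

/-- Apartness of rational intervals: a positive gap. -/
def rApart : RDot → RDot → Prop
  | some a, some b => b.1.2 < a.1.1 ∨ a.1.2 < b.1.1
  | _, _ => False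

/-- Refinement of rational intervals: containment of closed intervals. -/
def rRefines : RDot → RDot → Prop
  | _, none => True
  | none, some _ => False
  | some a, some b => b.1.1 ≤ a.1.1 ∧ a.1.2 ≤ b.1.2

/-- The pre-natural space of the natural real numbers. -/
noncomputable def RPre : PreNaturalSpace RDot where
  countable' := by unfold RDot; infer_instance
  apart := rApart
  refines := rRefines
  apart_dec := Classical.decRel _
  refines_dec := Classical.decRel _
  apart_symm := by
    rintro (_ | a) (_ | b) h <;> simp [rApart] at h ⊢ <;> tauto
  apart_irrefl := by
    rintro (_ | a) h
    · exact h
    · simp only [rApart] at h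
      rcases h with h | h <;> exact absurd a.2 (not_lt.mpr h.le)
  apart_mono := by
    rintro (_ | a) (_ | b) (_ | c) hab hcb <;>
      simp [rApart, rRefines] at hab hcb ⊢
    rcases hcb with h | h
    · exact Or.inl (lt_of_le_of_lt hab.2 h)
    · exact Or.inr (lt_of_lt_of_le h hab.1)
  refines_refl := by rintro (_ | a) <;> simp [rRefines]
  refines_trans := by
    rintro (_ | a) (_ | b) (_ | c) h1 h2 <;> simp [rRefines] at h1 h2 ⊢
    exact ⟨le_trans h2.1 h1.1, le_trans h1.2 h2.2⟩
  refines_antisymm := by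
    rintro (_ | a) (_ | b) h1 h2 <;> simp [rRefines] at h1 h2 ⊢ <;> try rfl
    have : a.1 = b.1 := Prod.ext (le_antisymm h2.1 h1.1) (le_antisymm h1.2 h2.2)
    exact congrArg some (Subtype.ext this)

lemma dyadic_lt (n : ℤ) (m : ℕ) : (n : ℚ) / 2 ^ m < ((n : ℚ) + 2) / 2 ^ m := by
  have h2 : (0 : ℚ) < 2 ^ m := by positivity
  rw [div_lt_div_iff_of_pos_right h2]
  linarith

/-- The lean dyadic interval `[n/2^m, (n+2)/2^m]` as a dot of the natural reals. -/
def leanIv (n : ℤ) (m : ℕ) : RDot :=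
  some ⟨((n : ℚ) / 2 ^ m, ((n : ℚ) + 2) / 2 ^ m), dyadic_lt n m⟩

/-- The basic dots of `σ_ℝ` : the maximal dot together with the lean dyadic intervals. -/
def IsLeanDyadic : Set RDot := { d | d = none ∨ ∃ (n : ℤ) (m : ℕ), d = leanIv n m }

/-- The spraid `σ_ℝ` of lean dyadic intervals, with the apartness and refinement
of the natural reals. -/
noncomputable def SigPre : PreNaturalSpace IsLeanDyadic := RPre.restrict IsLeanDyadic

/-- The unique real number represented by a natural real: the supremum of the
left endpoints of its intervals. -/
noncomputable def rhoR (x : RPre.Pt) : ℝ :=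
  sSup { r : ℝ | ∃ (n : ℕ) (pq : { pq : ℚ × ℚ // pq.1 < pq.2 }),
    x.1 n = some pq ∧ r = (pq.1.1 : ℝ) }

/-- The unique real number represented by a point of `σ_ℝ`. -/
noncomputable def rhoSig (x : SigPre.Pt) : ℝ :=
  sSup { r : ℝ | ∃ (n : ℕ) (pq : { pq : ℚ × ℚ // pq.1 < pq.2 }),
    (x.1 n).1 = some pq ∧ r = (pq.1.1 : ℝ) }


/-!
A trail morphism `f` assigns to every point `x` the real number `ρ(f(x♯))`, and points that are
`≡` get the same number. If a point `z` passes through a refinement of `x n`, it is `≡` to the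
point that follows `x` up to `n` and `z` afterwards, whose trail at `n + 1` is `x♯(n + 1)`; so
the numbers of all points through `x n` lie in the dyadic interval `f(x♯(n + 1))`, and the
width of this set of numbers tends to `0` along `x`.

The dot `g a` is the least lean dyadic interval containing the numbers of the points through
`a`, widened on both sides by `2^{-#{b | a ⊑ b}}`. The widening is positive, so least lean
dyadic hulls exist; it grows along `⊑`, so `g` is monotone; and in a spraid there are only
finitely many dots above each dot, so it tends to `0` along points, which makes `g(x)` a point.
Both `g(x)` and `f(x♯)` contain the number of `x` in all their intervals, hence `g(x) ≡ f(x♯)`.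
-/

namespace PreNaturalSpace

variable {V : Type} (P : PreNaturalSpace V)

lemma apart_of_refines_left {a b c : V} (hab : P.refines a b) (h : P.apart b c) :
    P.apart a c :=
  P.apart_symm _ _ (P.apart_mono _ _ _ hab (P.apart_symm _ _ h))

lemma not_apart_of_refines_refines {a b c : V} (ha : P.refines c a) (hb : P.refines c b) :
    ¬ P.apart a b := fun h =>
  P.apart_irrefl c (P.apart_of_refines_left ha (P.apart_mono _ _ _ hb h))

lemma strict_of_strict_of_refines {a b c : V} (hab : P.strict a b) (hbc : P.refines b c) :
    P.strict a c :=
  ⟨P.refines_trans _ _ _ hab.1 hbc, fun h => hab.2 (P.refines_antisymm _ _ hab.1 (h ▸ hbc))⟩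

variable {P}

lemma IsPoint.lt_of_strict {p : ℕ → V} (hp : P.IsPoint p) {i j : ℕ} (h : P.strict (p j) (p i)) :
    i < j := by
  by_contra! hji
  exact h.2 (P.refines_antisymm _ _ h.1 (P.refines_of_le hp.mono hji))

lemma IsPoint.of_shift_eq {p q : ℕ → V} (hp : P.IsPoint p)
    (hq : ∀ n, P.refines (q (n + 1)) (q n)) {N k : ℕ} (h : ∀ i, q (N + i) = p (k + i)) :
    P.IsPoint q where
  mono := hq
  shrink n := by
    have hle : P.refines (p (k + (n - N))) (q n) := by
      rw [← h]
      exact P.refines_of_le hq (by omega)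
    obtain ⟨j, hj⟩ := hp.shrink (k + (n - N))
    have hkj := hp.lt_of_strict hj
    refine ⟨N + (j - k), ?_⟩
    rw [h, show k + (j - k) = j by omega]
    exact P.strict_of_strict_of_refines hj hle
  decides a b hab := by
    obtain ⟨m, hm⟩ := hp.decides a b hab
    have hle : P.refines (q (N + m)) (p m) := h m ▸ P.refines_of_le hp.mono (by omega)
    exact ⟨N + m, hm.imp (P.apart_of_refines_left hle) (P.apart_of_refines_left hle)⟩

lemma not_apart_of_shift_eq {p q : ℕ → V} (hp : ∀ n, P.refines (p (n + 1)) (p n))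
    (hq : ∀ n, P.refines (q (n + 1)) (q n)) {N k : ℕ} (h : ∀ i, q (N + i) = p (k + i)) (i : ℕ) :
    ¬ P.apart (q i) (p i) :=
  P.not_apart_of_refines_refines (P.refines_of_le hq (Nat.le_add_left i N))
    (h i ▸ P.refines_of_le hp (Nat.le_add_left i k))

end PreNaturalSpace

section segList

variable {V : Type}

lemma segList_congr {p q : ℕ → V} {n : ℕ} (h : ∀ i < n, p i = q i) :
    segList p n = segList q n := by
  induction n with
  | zero => rfl
  | succ n ih =>
    rw [segList, segList, ih fun i hi => h i (by omega), h n (by omega)]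

lemma getLast?_segList_succ (p : ℕ → V) (n : ℕ) :
    (segList p (n + 1)).getLast? = some (p n) := by
  rw [segList]
  split_ifs with h
  · exact h
  · exact List.getLast?_concat

lemma segList_prefix_succ (p : ℕ → V) (n : ℕ) : segList p n <+: segList p (n + 1) := by
  rw [segList]
  split_ifs
  · exact List.prefix_refl _
  · exact List.prefix_append _ _

lemma segList_prefix_of_le (p : ℕ → V) {m n : ℕ} (h : m ≤ n) :
    segList p m <+: segList p n := by
  induction h with
  | refl => exact List.prefix_refl _
  | step _ ih => exact ih.trans (segList_prefix_succ p _)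

lemma exists_eq_of_mem_segList {p : ℕ → V} {n : ℕ} {a : V} (h : a ∈ segList p n) :
    ∃ j < n, p j = a := by
  induction n with
  | zero => simp [segList] at h
  | succ n ih =>
    rw [segList] at h
    split_ifs at h
    · obtain ⟨j, hj, rfl⟩ := ih h
      exact ⟨j, by omega, rfl⟩
    · rcases List.mem_append.mp h with h | h
      · obtain ⟨j, hj, rfl⟩ := ih h
        exact ⟨j, by omega, rfl⟩
      · exact ⟨n, by omega, (List.mem_singleton.mp h).symm⟩

end segList

namespace PreNaturalSpace

variable {V : Type} {P : PreNaturalSpace V} {p : ℕ → V}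

lemma isChain_segList (hp : ∀ n, P.refines (p (n + 1)) (p n)) (n : ℕ) :
    (segList p n).IsChain fun a b => P.strict b a := by
  induction n with
  | zero => exact List.isChain_nil
  | succ n ih =>
    rw [segList]
    split_ifs with hlast
    · exact ih
    · refine List.isChain_append.mpr ⟨ih, List.isChain_singleton _, ?_⟩
      rintro x hx y ⟨⟩
      cases n with
      | zero => simp [segList] at hx
      | succ n =>
        rw [getLast?_segList_succ, Option.mem_some_iff] at hx
        subst hx
        exact ⟨hp n, fun he => hlast (by rw [getLast?_segList_succ, he])⟩

lemma refines_of_mem_segList (hp : ∀ n, P.refines (p (n + 1)) (p n)) {n : ℕ} {a : V}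
    (h : a ∈ segList p (n + 1)) : P.refines (p n) a := by
  obtain ⟨j, hj, rfl⟩ := exists_eq_of_mem_segList h
  exact P.refines_of_le hp (by omega)

lemma IsPoint.length_segList_lt (hp : P.IsPoint p) (n : ℕ) :
    ∃ m, (segList p n).length < (segList p m).length := by
  obtain ⟨m, hm⟩ := hp.shrink n
  have hnm := hp.lt_of_strict hm
  have hpre : segList p (n + 1) <+: segList p (m + 1) := segList_prefix_of_le p (by omega)
  refine ⟨m + 1, lt_of_le_of_lt (segList_prefix_succ p n).length_le ?_⟩
  refine lt_of_le_of_ne hpre.length_le fun hlen => hm.2 ?_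
  have := getLast?_segList_succ p m
  rwa [← hpre.eq_of_length hlen, getLast?_segList_succ, Option.some_inj, eq_comm] at this

lemma IsPoint.exists_le_length_segList (hp : P.IsPoint p) (L : ℕ) :
    ∃ n, L ≤ (segList p n).length := by
  induction L with
  | zero => exact ⟨0, Nat.zero_le _⟩
  | succ L ih =>
    obtain ⟨n, hn⟩ := ih
    obtain ⟨m, hm⟩ := hp.length_segList_lt n
    exact ⟨m, by omega⟩

end PreNaturalSpace

namespace PreNaturalSpace

variable {V : Type} {P : PreNaturalSpace V}

/-- `sharp x n` is the trail `x♯(n)`. -/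
noncomputable def sharp (x : P.Pt) (n : ℕ) : P.Trail :=
  ⟨segList x.1 n, isChain_segList x.2.mono n⟩

lemma sharp_apart_iff {x y : P.Pt} {i : ℕ} :
    P.trailSpace.apart (sharp x (i + 1)) (sharp y (i + 1)) ↔ P.apart (x.1 i) (y.1 i) := by
  change (∃ a ∈ (segList x.1 (i + 1)).getLast?, ∃ b ∈ (segList y.1 (i + 1)).getLast?, _) ↔ _
  simp [getLast?_segList_succ]

lemma isPoint_sharp (x : P.Pt) : P.trailSpace.IsPoint (sharp x) where
  mono n := segList_prefix_succ x.1 n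
  shrink n := by
    obtain ⟨m, hm⟩ := x.2.length_segList_lt n
    have hnm : n ≤ m := by
      by_contra! h
      exact absurd (segList_prefix_of_le x.1 h.le).length_le (by omega)
    exact ⟨m, segList_prefix_of_le x.1 hnm, fun he => hm.ne (congrArg (·.1.length) he).symm⟩
  decides := by
    rintro a b ⟨u, hu, w, hw, huw⟩
    obtain ⟨m, hm⟩ := x.2.decides u w huw
    have hlast : x.1 m ∈ (segList x.1 (m + 1)).getLast? := getLast?_segList_succ x.1 m
    exact ⟨m + 1, hm.imp (fun h => ⟨_, hlast, u, hu, h⟩) (fun h => ⟨_, hlast, w, hw, h⟩)⟩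

noncomputable def sharpPt (x : P.Pt) : P.trailSpace.Pt := ⟨sharp x, isPoint_sharp x⟩

lemma not_apart_sharp {x y : P.Pt} (h : ∀ i, ¬ P.apart (x.1 i) (y.1 i)) :
    ∀ i, ¬ P.trailSpace.apart (sharp x i) (sharp y i)
  | 0, ⟨_, hu, _⟩ => by simp [sharp, segList] at hu
  | i + 1, hi => h i (sharp_apart_iff.mp hi)

end PreNaturalSpace

lemma exists_two_div_pow_lt {K : Type*} [Field K] [LinearOrder K] [IsStrictOrderedRing K]
    [Archimedean K] {ε : K} (hε : 0 < ε) : ∃ j : ℕ, 2 / 2 ^ j < ε := by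
  obtain ⟨j, hj⟩ := pow_unbounded_of_one_lt (2 / ε) one_lt_two
  exact ⟨j, (div_lt_comm₀ (by positivity) hε).mpr hj⟩

def rMem (r : ℝ) : RDot → Prop
  | none => True
  | some pq => (pq.1.1 : ℝ) ≤ r ∧ r ≤ pq.1.2

lemma not_rApart_of_rMem {r : ℝ} {d e : RDot} (hd : rMem r d) (he : rMem r e) :
    ¬ rApart d e := by
  rcases d with _ | a <;> rcases e with _ | b <;> simp only [rApart, not_false_eq_true]
  rintro (h | h) <;> linarith [hd.1, hd.2, he.1, he.2, (Rat.cast_lt (K := ℝ)).mpr h]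

lemma rMem_leanIv {r : ℝ} {n : ℤ} {m : ℕ} :
    rMem r (leanIv n m) ↔ (n : ℝ) / 2 ^ m ≤ r ∧ r ≤ ((n : ℝ) + 2) / 2 ^ m := by
  simp only [rMem, leanIv]
  push_cast
  rfl

lemma rRefines_none (d : RDot) : rRefines d none := by
  cases d <;> trivial

lemma rRefines_leanIv_iff {a b : ℤ} {m k : ℕ} :
    rRefines (leanIv a m) (leanIv b k) ↔
      (b : ℚ) / 2 ^ k ≤ a / 2 ^ m ∧ ((a : ℚ) + 2) / 2 ^ m ≤ (b + 2) / 2 ^ k :=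
  Iff.rfl

lemma level_le_of_rRefines_leanIv {a b : ℤ} {m k : ℕ} (h : rRefines (leanIv a m) (leanIv b k)) :
    k ≤ m := by
  obtain ⟨h1, h2⟩ := rRefines_leanIv_iff.mp h
  have hw : (2 : ℚ) / 2 ^ m ≤ 2 / 2 ^ k := by
    calc (2 : ℚ) / 2 ^ m = (a + 2) / 2 ^ m - a / 2 ^ m := by ring
      _ ≤ (b + 2) / 2 ^ k - b / 2 ^ k := by linarith
      _ = 2 / 2 ^ k := by ring
  rw [div_le_div_iff_of_pos_left two_pos (by positivity) (by positivity)] at hw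
  exact (pow_le_pow_iff_right₀ one_lt_two).mp hw

lemma level_lt_of_rRefines_leanIv {a b : ℤ} {m k : ℕ} (h : rRefines (leanIv a m) (leanIv b k))
    (hne : leanIv a m ≠ leanIv b k) : k < m := by
  refine lt_of_le_of_ne (level_le_of_rRefines_leanIv h) fun hkm => hne ?_
  subst hkm
  obtain ⟨h1, h2⟩ := rRefines_leanIv_iff.mp h
  rw [div_le_div_iff_of_pos_right (by positivity)] at h1 h2
  rw [show a = b by exact_mod_cast le_antisymm (by linarith) h1]

def LeanLevelGE (d : RDot) (j : ℕ) : Prop := ∃ (a : ℤ) (m : ℕ), d = leanIv a m ∧ j ≤ m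

lemma LeanLevelGE.of_rRefines {d : IsLeanDyadic} {e : RDot} {j : ℕ} (h : rRefines d.1 e)
    (he : LeanLevelGE e j) : LeanLevelGE d.1 j := by
  obtain ⟨b, k, rfl, hjk⟩ := he
  rcases d.2 with hd | ⟨a, m, hd⟩
  · rw [hd] at h
    exact h.elim
  · rw [hd] at h ⊢
    exact ⟨a, m, rfl, hjk.trans (level_le_of_rRefines_leanIv h)⟩

lemma LeanLevelGE.near {d : RDot} {j : ℕ} {x : ℝ} (hd : LeanLevelGE d j) (hx : rMem x d) :
    ∃ pq : { pq : ℚ × ℚ // pq.1 < pq.2 }, d = some pq ∧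
      x - 2 / 2 ^ j ≤ pq.1.1 ∧ (pq.1.2 : ℝ) ≤ x + 2 / 2 ^ j := by
  obtain ⟨a, m, rfl, hjm⟩ := hd
  have hw : (2 : ℝ) / 2 ^ m ≤ 2 / 2 ^ j := by gcongr; norm_num
  obtain ⟨h1, h2⟩ := rMem_leanIv.mp hx
  refine ⟨_, rfl, ?_, ?_⟩ <;> push_cast
  · have : ((a : ℝ) + 2) / 2 ^ m = a / 2 ^ m + 2 / 2 ^ m := by ring
    linarith
  · have : ((a : ℝ) + 2) / 2 ^ m = a / 2 ^ m + 2 / 2 ^ m := by ring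
    linarith

lemma LeanLevelGE.sub_le {d : RDot} {j : ℕ} {x y : ℝ} (hd : LeanLevelGE d j) (hx : rMem x d)
    (hy : rMem y d) : y - x ≤ 2 / 2 ^ j := by
  obtain ⟨pq, rfl, -, hpq⟩ := hd.near hx
  linarith [hy.2]

lemma LeanLevelGE.rApart {d e : RDot} {j : ℕ} {x y : ℝ} (hd : LeanLevelGE d j)
    (he : LeanLevelGE e j) (hx : rMem x d) (hy : rMem y e) (hxy : 2 * (2 / 2 ^ j) < y - x) :
    rApart d e := by
  obtain ⟨pd, rfl, -, hpd⟩ := hd.near hx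
  obtain ⟨pe, rfl, hpe, -⟩ := he.near hy
  exact Or.inr (by exact_mod_cast (show (pd.1.2 : ℝ) < pe.1.1 by linarith))

lemma exists_level_rApart_or_rApart {x y : RDot} (h : rApart x y) :
    ∃ j, ∀ d, LeanLevelGE d j → rApart d x ∨ rApart d y := by
  rcases x with _ | a <;> rcases y with _ | b <;> try exact h.elim
  set gap := max (a.1.1 - b.1.2) (b.1.1 - a.1.2)
  have hgap : 0 < gap := by
    rcases h with h | h
    · exact lt_max_of_lt_left (by linarith)
    · exact lt_max_of_lt_right (by linarith)
  obtain ⟨j, hj⟩ := exists_two_div_pow_lt hgap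
  refine ⟨j, ?_⟩
  rintro _ ⟨c, m, rfl, hjm⟩
  have hw : (2 : ℚ) / 2 ^ m ≤ 2 / 2 ^ j := by gcongr; norm_num
  have hc : ((c : ℚ) + 2) / 2 ^ m = c / 2 ^ m + 2 / 2 ^ m := by ring
  by_contra! hna
  simp only [rApart, leanIv, not_or, not_lt] at hna
  rcases h with h | h
  · have : gap ≤ a.1.1 - b.1.2 := max_le le_rfl (by linarith [a.2, b.2])
    linarith
  · have : gap ≤ b.1.1 - a.1.2 := max_le (by linarith [a.2, b.2]) le_rfl
    linarith

lemma lo_le_hi_of_rRefines {c : RDot} {a b : { pq : ℚ × ℚ // pq.1 < pq.2 }}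
    (ha : rRefines c (some a)) (hb : rRefines c (some b)) : a.1.1 ≤ b.1.2 := by
  rcases c with _ | c
  · exact ha.elim
  · linarith [ha.1, hb.2, c.2]

lemma exists_not_leanLevelGE (d : IsLeanDyadic) : ∃ j, ¬ LeanLevelGE d.1 j := by
  rcases d.2 with hd | ⟨b, k, hd⟩
  · exact ⟨0, fun ⟨a, m, he, _⟩ => Option.some_ne_none _ (he.symm.trans hd)⟩
  · refine ⟨k + 1, fun ⟨a, m, he, hkm⟩ => ?_⟩
    have hrefl : rRefines (leanIv b k) (leanIv a m) := by
      rw [← he, ← hd]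
      exact RPre.refines_refl _
    have : m ≤ k := level_le_of_rRefines_leanIv hrefl
    omega

lemma exists_leanIv_of_strict {d e : IsLeanDyadic} (h : SigPre.strict d e) :
    ∃ a m, d.1 = leanIv a m := by
  rcases d.2 with hd | hd
  · have hde : rRefines d.1 e.1 := h.1
    rw [hd] at hde
    rcases he : e.1 with _ | b
    · exact (h.2 (Subtype.ext (hd.trans he.symm))).elim
    · rw [he] at hde
      exact hde.elim
  · exact hd

namespace SigPre

lemma leanLevelGE_of_le {s : ℕ → IsLeanDyadic} (hs : ∀ n, SigPre.refines (s (n + 1)) (s n))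
    {n n' j : ℕ} (h : n ≤ n') (hn : LeanLevelGE (s n).1 j) : LeanLevelGE (s n').1 j :=
  hn.of_rRefines (SigPre.refines_of_le hs h)

lemma exists_leanLevelGE (p : SigPre.Pt) (j : ℕ) : ∃ n, LeanLevelGE (p.1 n).1 j := by
  induction j with
  | zero =>
    obtain ⟨n, hn⟩ := p.2.shrink 0
    obtain ⟨a, m, ha⟩ := exists_leanIv_of_strict hn
    exact ⟨n, a, m, ha, Nat.zero_le m⟩
  | succ j ih =>
    obtain ⟨n, a, m, ha, hjm⟩ := ih
    obtain ⟨n', hn'⟩ := p.2.shrink n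
    obtain ⟨b, k, hb⟩ := exists_leanIv_of_strict hn'
    have hrefines : rRefines (leanIv b k) (leanIv a m) := hb ▸ ha ▸ hn'.1
    have hmk := level_lt_of_rRefines_leanIv hrefines
      fun he => hn'.2 (Subtype.ext (hb.trans (he.trans ha.symm)))
    exact ⟨n', b, k, hb, by omega⟩

lemma rMem_rhoSig (p : SigPre.Pt) (n : ℕ) : rMem (rhoSig p) (p.1 n).1 := by
  have hcross : ∀ i k (a b : { pq : ℚ × ℚ // pq.1 < pq.2 }), (p.1 i).1 = some a →
      (p.1 k).1 = some b → (a.1.1 : ℝ) ≤ b.1.2 := by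
    intro i k a b ha hb
    have hi : rRefines (p.1 (max i k)).1 (some a) :=
      ha ▸ SigPre.refines_of_le p.2.mono (le_max_left i k)
    have hk : rRefines (p.1 (max i k)).1 (some b) :=
      hb ▸ SigPre.refines_of_le p.2.mono (le_max_right i k)
    exact_mod_cast lo_le_hi_of_rRefines hi hk
  obtain ⟨n₀, a₀, m₀, h₀, -⟩ := exists_leanLevelGE p 0
  match hn : (p.1 n).1 with
  | none => trivial
  | some pq =>
    have hle : ∀ r ∈ { r : ℝ | ∃ (k : ℕ) (b : { pq : ℚ × ℚ // pq.1 < pq.2 }),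
        (p.1 k).1 = some b ∧ r = (b.1.1 : ℝ) }, r ≤ pq.1.2 := by
      rintro r ⟨k, b, hb, rfl⟩
      exact hcross k n b pq hb hn
    exact ⟨le_csSup ⟨_, hle⟩ ⟨n, pq, hn, rfl⟩, csSup_le ⟨_, n₀, _, h₀, rfl⟩ hle⟩

lemma exists_apart_of_rhoSig_lt {p q : SigPre.Pt} (h : rhoSig p < rhoSig q) :
    ∃ n, SigPre.apart (p.1 n) (q.1 n) := by
  obtain ⟨j, hj⟩ := exists_two_div_pow_lt (half_pos (sub_pos.mpr h))
  obtain ⟨np, hp⟩ := exists_leanLevelGE p j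
  obtain ⟨nq, hq⟩ := exists_leanLevelGE q j
  exact ⟨max np nq, (leanLevelGE_of_le p.2.mono (le_max_left np nq) hp).rApart
    (leanLevelGE_of_le q.2.mono (le_max_right np nq) hq) (rMem_rhoSig p _) (rMem_rhoSig q _)
    (by linarith)⟩

lemma rhoSig_eq_of_not_apart {p q : SigPre.Pt} (h : ∀ n, ¬ SigPre.apart (p.1 n) (q.1 n)) :
    rhoSig p = rhoSig q := by
  refine le_antisymm (not_lt.mp fun hlt => ?_) (not_lt.mp fun hlt => ?_)
  · obtain ⟨n, hn⟩ := exists_apart_of_rhoSig_lt hlt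
    exact h n (SigPre.apart_symm _ _ hn)
  · obtain ⟨n, hn⟩ := exists_apart_of_rhoSig_lt hlt
    exact h n hn

lemma isPoint_of_exists_leanLevelGE {s : ℕ → IsLeanDyadic}
    (hs : ∀ n, SigPre.refines (s (n + 1)) (s n)) (h : ∀ j, ∃ n, LeanLevelGE (s n).1 j) :
    SigPre.IsPoint s where
  mono := hs
  shrink n := by
    obtain ⟨j, hj⟩ := exists_not_leanLevelGE (s n)
    obtain ⟨n', hn'⟩ := h j
    exact ⟨max n n', SigPre.refines_of_le hs (le_max_left n n'),
      fun he => hj (he ▸ leanLevelGE_of_le hs (le_max_right n n') hn')⟩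
  decides a b hab := by
    obtain ⟨j, hj⟩ := exists_level_rApart_or_rApart hab
    obtain ⟨n, hn⟩ := h j
    exact ⟨n, hj _ hn⟩

end SigPre

/-- `[u, v] ⊆ [n/2^m, (n+2)/2^m]`, scaled by `2^m`. -/
def LeanCovers (u v : ℝ) (n : ℤ) (m : ℕ) : Prop := (n : ℝ) ≤ u * 2 ^ m ∧ v * 2 ^ m ≤ n + 2

section LeanCovers

variable {u v : ℝ}

lemma exists_leanCovers {m : ℕ} (h : (v - u) * 2 ^ m ≤ 1) : ∃ n, LeanCovers u v n m := by
  refine ⟨⌊u * 2 ^ m⌋, Int.floor_le _, ?_⟩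
  linarith [Int.lt_floor_add_one (u * 2 ^ m), sub_mul v u (2 ^ m)]

lemma LeanCovers.mul_le {n : ℤ} {m : ℕ} (h : LeanCovers u v n m) : (v - u) * 2 ^ m ≤ 2 := by
  linarith [h.1, h.2, sub_mul v u (2 ^ m)]

lemma LeanCovers.mono {u' v' : ℝ} {n : ℤ} {m : ℕ} (hu : u' ≤ u) (hv : v ≤ v')
    (h : LeanCovers u' v' n m) : LeanCovers u v n m := by
  have hm : (0 : ℝ) < 2 ^ m := by positivity
  exact ⟨h.1.trans (by gcongr), le_trans (by gcongr) h.2⟩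

lemma LeanCovers.rMem {n : ℤ} {m : ℕ} {r : ℝ} (h : LeanCovers u v n m) (hu : u ≤ r)
    (hv : r ≤ v) : rMem r (leanIv n m) := by
  have hm : (0 : ℝ) < 2 ^ m := by positivity
  rw [rMem_leanIv, div_le_iff₀ hm, le_div_iff₀ hm]
  exact ⟨h.1.trans (by gcongr), le_trans (by gcongr) h.2⟩

lemma LeanCovers.half {n : ℤ} {m : ℕ} (h : LeanCovers u v n (m + 1)) :
    LeanCovers u v (n / 2) m := by
  have h1 : 2 * ((n / 2 : ℤ) : ℝ) ≤ n := by exact_mod_cast (by omega : 2 * (n / 2) ≤ n)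
  have h2 : (n : ℝ) ≤ 2 * ((n / 2 : ℤ) : ℝ) + 1 := by
    exact_mod_cast (by omega : n ≤ 2 * (n / 2) + 1)
  obtain ⟨hu, hv⟩ := h
  rw [pow_succ] at hu hv
  constructor <;> linarith

lemma LeanCovers.exists_of_le {n : ℤ} {m k : ℕ} (h : LeanCovers u v n m) (hkm : k ≤ m) :
    ∃ c, LeanCovers u v c k := by
  obtain ⟨d, rfl⟩ := Nat.exists_eq_add_of_le hkm
  induction d generalizing n with
  | zero => exact ⟨n, h⟩
  | succ d ih => exact ih h.half (by omega)

end LeanCovers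

structure IsMaxLeanCover (u v : ℝ) (n : ℤ) (m : ℕ) : Prop where
  covers : LeanCovers u v n m
  not_covers_succ : ∀ c, ¬ LeanCovers u v c (m + 1)

section IsMaxLeanCover

variable {u v : ℝ}

lemma exists_isMaxLeanCover (huv : u < v) {n : ℤ} {m : ℕ} (h : LeanCovers u v n m) :
    ∃ n m, IsMaxLeanCover u v n m := by
  by_contra hmax
  have hall : ∀ k, ∃ c, LeanCovers u v c (m + k) := by
    intro k
    induction k with
    | zero => exact ⟨n, h⟩
    | succ k ih =>
      obtain ⟨c, hc⟩ := ih
      by_contra! hno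
      exact hmax ⟨c, m + k, hc, hno⟩
  obtain ⟨L, hL⟩ := pow_unbounded_of_one_lt (2 / (v - u)) one_lt_two
  obtain ⟨c, hc⟩ := hall L
  obtain ⟨c', hc'⟩ := hc.exists_of_le (Nat.le_add_left L m)
  have := hc'.mul_le
  rw [div_lt_iff₀ (sub_pos.mpr huv)] at hL
  linarith

lemma IsMaxLeanCover.le_level {a b : ℤ} {m k : ℕ} (h : IsMaxLeanCover u v a m)
    (hb : LeanCovers u v b k) : k ≤ m := by
  by_contra! hmk
  obtain ⟨c, hc⟩ := hb.exists_of_le hmk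
  exact h.not_covers_succ c hc

/-- Two lean dyadic intervals that both cover `[u, v]` meet in a lean dyadic interval covering
`[u, v]`; for a cover of maximal level that intersection is the cover itself. -/
lemma IsMaxLeanCover.rRefines {a b : ℤ} {m k : ℕ} (h : IsMaxLeanCover u v a m)
    (hb : LeanCovers u v b k) : rRefines (leanIv a m) (leanIv b k) := by
  obtain ⟨d, rfl⟩ := Nat.exists_eq_add_of_le (h.le_level hb)
  have hpow : (2 : ℝ) ^ (k + d) = 2 ^ k * 2 ^ d := pow_add 2 k d
  have hD : (0 : ℝ) < 2 ^ d := by positivity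
  have hb1 : (b : ℝ) * 2 ^ d ≤ u * 2 ^ (k + d) := by
    rw [hpow, ← mul_assoc]; exact mul_le_mul_of_nonneg_right hb.1 hD.le
  have hb2 : v * 2 ^ (k + d) ≤ (b + 2) * 2 ^ d := by
    rw [hpow, ← mul_assoc]; exact mul_le_mul_of_nonneg_right hb.2 hD.le
  obtain ⟨ha1, ha2⟩ := h.covers
  have hleft : b * 2 ^ d ≤ a := by
    by_contra! hlt
    have : (a : ℝ) + 1 ≤ b * 2 ^ d := by exact_mod_cast hlt
    refine h.not_covers_succ (2 * a + 2) ⟨?_, ?_⟩ <;> push_cast <;> rw [pow_succ] <;> linarith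
  have hright : a + 2 ≤ (b + 2) * 2 ^ d := by
    by_contra! hlt
    have : ((b : ℝ) + 2) * 2 ^ d ≤ a + 1 := by exact_mod_cast (by omega : (b + 2) * 2 ^ d ≤ a + 1)
    refine h.not_covers_succ (2 * a) ⟨?_, ?_⟩ <;> push_cast <;> rw [pow_succ] <;> linarith
  have hk : (0 : ℚ) < 2 ^ k := by positivity
  rw [rRefines_leanIv_iff, pow_add, div_le_div_iff₀ hk (by positivity),
    div_le_div_iff₀ (by positivity) hk]
  constructor
  · calc (b : ℚ) * (2 ^ k * 2 ^ d) = (b * 2 ^ d) * 2 ^ k := by ring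
      _ ≤ a * 2 ^ k := by gcongr; exact_mod_cast hleft
  · calc ((a : ℚ) + 2) * 2 ^ k ≤ ((b + 2) * 2 ^ d) * 2 ^ k := by gcongr; exact_mod_cast hright
      _ = (b + 2) * (2 ^ k * 2 ^ d) := by ring

end IsMaxLeanCover

open Classical in
/-- The least lean dyadic interval containing `[u, v]`, or `(-∞,∞)` if there is none. -/
noncomputable def leanHull (u v : ℝ) : IsLeanDyadic :=
  if h : ∃ n m, IsMaxLeanCover u v n m then
    ⟨leanIv h.choose h.choose_spec.choose, Or.inr ⟨_, _, rfl⟩⟩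
  else ⟨none, Or.inl rfl⟩

section leanHull

variable {u v : ℝ}

lemma leanHull_of_exists (h : ∃ n m, IsMaxLeanCover u v n m) :
    ∃ n m, IsMaxLeanCover u v n m ∧ (leanHull u v).1 = leanIv n m := by
  rw [leanHull, dif_pos h]
  exact ⟨_, _, h.choose_spec.choose_spec, rfl⟩

lemma leanHull_of_not_exists (h : ¬ ∃ n m, IsMaxLeanCover u v n m) :
    (leanHull u v).1 = none := by
  rw [leanHull, dif_neg h]

lemma rMem_leanHull {r : ℝ} (hu : u ≤ r) (hv : r ≤ v) : rMem r (leanHull u v).1 := by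
  by_cases h : ∃ n m, IsMaxLeanCover u v n m
  · obtain ⟨n, m, hnm, heq⟩ := leanHull_of_exists h
    exact heq ▸ hnm.covers.rMem hu hv
  · rw [leanHull_of_not_exists h]
    trivial

lemma leanHull_mono {u' v' : ℝ} (huv : u < v) (hu : u' ≤ u) (hv : v ≤ v') :
    rRefines (leanHull u v).1 (leanHull u' v').1 := by
  by_cases h' : ∃ n m, IsMaxLeanCover u' v' n m
  · obtain ⟨b, k, hb, hbeq⟩ := leanHull_of_exists h'
    have hcov := hb.covers.mono hu hv
    obtain ⟨a, m, ha, haeq⟩ := leanHull_of_exists (exists_isMaxLeanCover huv hcov)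
    rw [haeq, hbeq]
    exact ha.rRefines hcov
  · rw [leanHull_of_not_exists h']
    exact rRefines_none _

lemma leanLevelGE_leanHull (huv : u < v) {j : ℕ} (hj : (v - u) * 2 ^ j ≤ 1) :
    LeanLevelGE (leanHull u v).1 j := by
  obtain ⟨n, hn⟩ := exists_leanCovers hj
  obtain ⟨a, m, ha, heq⟩ := leanHull_of_exists (exists_isMaxLeanCover huv hn)
  exact ⟨a, m, heq, ha.le_level hn⟩

end leanHull

lemma bdd_and_sSup_sub_sInf_le_of_forall_sub_le {S : Set ℝ} {w : ℝ} (hne : S.Nonempty)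
    (h : ∀ x ∈ S, ∀ y ∈ S, y - x ≤ w) :
    BddBelow S ∧ BddAbove S ∧ sSup S - sInf S ≤ w := by
  obtain ⟨x₀, hx₀⟩ := hne
  have hbb : BddBelow S := ⟨x₀ - w, fun y hy => by linarith [h y hy x₀ hx₀]⟩
  have hba : BddAbove S := ⟨x₀ + w, fun y hy => by linarith [h x₀ hx₀ y hy]⟩
  refine ⟨hbb, hba, sub_le_iff_le_add'.mpr (csSup_le ⟨x₀, hx₀⟩ fun y hy => ?_)⟩
  exact sub_le_iff_le_add.mp (le_csInf ⟨x₀, hx₀⟩ fun x hx => sub_le_comm.mp (h x hx y hy))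

namespace PreNaturalSpace

variable {V : Type} (P : PreNaturalSpace V)

noncomputable def margin (a : V) : ℝ := 1 / 2 ^ {b | P.refines a b}.ncard

variable {P}

lemma margin_pos (a : V) : 0 < P.margin a := by
  unfold margin
  positivity

lemma margin_mono (hfin : ∀ a : V, {b | P.refines a b}.Finite) {a b : V} (h : P.refines a b) :
    P.margin a ≤ P.margin b := by
  have hsub : {c | P.refines b c} ⊆ {c | P.refines a c} := fun c hc => P.refines_trans _ _ _ h hc
  exact one_div_pow_le_one_div_pow_of_le one_le_two (Set.ncard_le_ncard hsub (hfin a))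

lemma length_segList_le_ncard (hfin : ∀ a : V, {b | P.refines a b}.Finite) (x : P.Pt) (n : ℕ) :
    (segList x.1 (n + 1)).length ≤ {b | P.refines (x.1 n) b}.ncard := by
  classical
  have : IsTrans V (fun a b => P.strict b a) := ⟨fun _ _ _ h1 h2 => P.strict_trans_flip h1 h2⟩
  have hnodup : (segList x.1 (n + 1)).Nodup :=
    (List.isChain_iff_pairwise.mp (isChain_segList x.2.mono (n + 1))).imp fun h => Ne.symm h.2
  rw [← List.toFinset_card_of_nodup hnodup, ← Set.ncard_coe_finset]
  refine Set.ncard_le_ncard (fun b hb => ?_) (hfin _)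
  exact refines_of_mem_segList x.2.mono (List.mem_toFinset.mp hb)

end PreNaturalSpace

namespace RefMorphism

open PreNaturalSpace

variable {V : Type} {P : PreNaturalSpace V} (f : RefMorphism P.trailSpace SigPre)

noncomputable def trailReal (x : P.Pt) : ℝ := rhoSig (f.pointMap (sharpPt x))

lemma rMem_trailReal (x : P.Pt) (n : ℕ) : rMem (f.trailReal x) (f.toFun (sharp x n)).1 :=
  SigPre.rMem_rhoSig _ n

lemma trailReal_eq_of_not_apart {x y : P.Pt} (h : ∀ i, ¬ P.apart (x.1 i) (y.1 i)) :
    f.trailReal x = f.trailReal y := by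
  refine SigPre.rhoSig_eq_of_not_apart fun i hi => ?_
  obtain ⟨j, hj⟩ := f.reflects_apart _ _ (isPoint_sharp x) (isPoint_sharp y) ⟨i, hi⟩
  exact not_apart_sharp h j hj

def valuesThrough (a : V) : Set ℝ :=
  { r | ∃ z : P.Pt, ∃ k, P.refines (z.1 k) a ∧ r = f.trailReal z }

lemma valuesThrough_mono {a b : V} (h : P.refines a b) : f.valuesThrough a ⊆ f.valuesThrough b :=
  fun _ ⟨z, k, hzk, hr⟩ => ⟨z, k, P.refines_trans _ _ _ hzk h, hr⟩

lemma trailReal_mem_valuesThrough (x : P.Pt) (n : ℕ) : f.trailReal x ∈ f.valuesThrough (x.1 n) :=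
  ⟨x, n, P.refines_refl _, rfl⟩

lemma valuesThrough_nonempty (hP : P.AllDotsInhabited) (a : V) : (f.valuesThrough a).Nonempty :=
  let ⟨p, hp, m, hm⟩ := hP a
  ⟨_, ⟨p, hp⟩, m, hm.1, rfl⟩

lemma rMem_of_mem_valuesThrough (x : P.Pt) (n : ℕ) {r : ℝ} (hr : r ∈ f.valuesThrough (x.1 n)) :
    rMem r (f.toFun (sharp x (n + 1))).1 := by
  obtain ⟨z, k, hzk, rfl⟩ := hr
  let y : ℕ → V := fun i => if i ≤ n then x.1 i else z.1 (i - (n + 1) + k)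
  have hshift : ∀ i, y (n + 1 + i) = z.1 (k + i) := fun i => by
    simp only [y, if_neg (show ¬ n + 1 + i ≤ n by omega)]
    rw [show n + 1 + i - (n + 1) + k = k + i by omega]
  have hmono : ∀ i, P.refines (y (i + 1)) (y i) := fun i => by
    simp only [y]
    split_ifs with h1 h2 h2
    · exact x.2.mono i
    · exact absurd (Nat.le_of_succ_le h1) h2
    · rw [show i + 1 - (n + 1) + k = k by omega, show i = n by omega]
      exact hzk
    · rw [show i + 1 - (n + 1) + k = i - (n + 1) + k + 1 by omega]
      exact z.2.mono _
  let Y : P.Pt := ⟨y, z.2.of_shift_eq hmono hshift⟩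
  have hYz : f.trailReal Y = f.trailReal z :=
    f.trailReal_eq_of_not_apart (not_apart_of_shift_eq z.2.mono hmono hshift)
  have hsharp : sharp Y (n + 1) = sharp x (n + 1) :=
    Subtype.ext (segList_congr fun i hi => if_pos (by omega))
  rw [← hYz, ← hsharp]
  exact f.rMem_trailReal Y (n + 1)

noncomputable def widenedInf (a : V) : ℝ := sInf (f.valuesThrough a) - P.margin a

noncomputable def widenedSup (a : V) : ℝ := sSup (f.valuesThrough a) + P.margin a

open Classical in
noncomputable def hullDot (a : V) : IsLeanDyadic :=
  if BddBelow (f.valuesThrough a) ∧ BddAbove (f.valuesThrough a) then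
    leanHull (f.widenedInf a) (f.widenedSup a)
  else ⟨none, Or.inl rfl⟩

lemma hullDot_of_bdd {a : V} (h : BddBelow (f.valuesThrough a) ∧ BddAbove (f.valuesThrough a)) :
    f.hullDot a = leanHull (f.widenedInf a) (f.widenedSup a) :=
  if_pos h

lemma hullDot_of_not_bdd {a : V}
    (h : ¬ (BddBelow (f.valuesThrough a) ∧ BddAbove (f.valuesThrough a))) :
    (f.hullDot a).1 = none := by
  rw [hullDot, if_neg h]

lemma rMem_hullDot (x : P.Pt) (n : ℕ) : rMem (f.trailReal x) (f.hullDot (x.1 n)).1 := by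
  by_cases hb : BddBelow (f.valuesThrough (x.1 n)) ∧ BddAbove (f.valuesThrough (x.1 n))
  · have hmem := f.trailReal_mem_valuesThrough x n
    have hm := margin_pos (P := P) (x.1 n)
    rw [f.hullDot_of_bdd hb]
    exact rMem_leanHull (by unfold widenedInf; linarith [csInf_le hb.1 hmem])
      (by unfold widenedSup; linarith [le_csSup hb.2 hmem])
  · rw [f.hullDot_of_not_bdd hb]
    trivial

lemma widenedInf_lt_widenedSup (hP : P.AllDotsInhabited) {a : V}
    (h : BddBelow (f.valuesThrough a) ∧ BddAbove (f.valuesThrough a)) :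
    f.widenedInf a < f.widenedSup a := by
  unfold widenedInf widenedSup
  linarith [csInf_le_csSup (f.valuesThrough_nonempty hP a) h.1 h.2, margin_pos (P := P) a]

lemma hullDot_mono (hP : P.AllDotsInhabited) (hfin : ∀ a : V, {b | P.refines a b}.Finite)
    {a b : V} (h : P.refines a b) :
    SigPre.refines (f.hullDot a) (f.hullDot b) := by
  change rRefines (f.hullDot a).1 (f.hullDot b).1
  by_cases hb : BddBelow (f.valuesThrough b) ∧ BddAbove (f.valuesThrough b)
  · have hsub := f.valuesThrough_mono h
    have hne := f.valuesThrough_nonempty hP a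
    have ha : BddBelow (f.valuesThrough a) ∧ BddAbove (f.valuesThrough a) :=
      ⟨hb.1.mono hsub, hb.2.mono hsub⟩
    have hm := margin_mono hfin h
    rw [f.hullDot_of_bdd ha, f.hullDot_of_bdd hb]
    refine leanHull_mono (f.widenedInf_lt_widenedSup hP ha) ?_ ?_
    · unfold widenedInf
      linarith [csInf_le_csInf hb.1 hne hsub]
    · unfold widenedSup
      linarith [csSup_le_csSup hb.2 hne hsub]
  · rw [f.hullDot_of_not_bdd hb]
    exact rRefines_none _

lemma exists_leanLevelGE_hullDot (hP : P.AllDotsInhabited)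
    (hfin : ∀ a : V, {b | P.refines a b}.Finite) (x : P.Pt) (j : ℕ) :
    ∃ n, LeanLevelGE (f.hullDot (x.1 n)).1 j := by
  obtain ⟨n₁, hn₁⟩ := SigPre.exists_leanLevelGE (f.pointMap (sharpPt x)) (j + 2)
  obtain ⟨n₂, hn₂⟩ := x.2.exists_le_length_segList (j + 2)
  refine ⟨n₁ + n₂, ?_⟩
  set n := n₁ + n₂
  have hlevel : LeanLevelGE (f.toFun (sharp x (n + 1))).1 (j + 2) :=
    SigPre.leanLevelGE_of_le (f.pointMap (sharpPt x)).2.mono (by omega) hn₁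
  obtain ⟨hbb, hba, hwidth⟩ := bdd_and_sSup_sub_sInf_le_of_forall_sub_le
    (f.valuesThrough_nonempty hP (x.1 n)) fun r hr r' hr' =>
      hlevel.sub_le (f.rMem_of_mem_valuesThrough x n hr) (f.rMem_of_mem_valuesThrough x n hr')
  have hmargin : P.margin (x.1 n) ≤ 1 / 2 ^ (j + 2) := by
    refine one_div_pow_le_one_div_pow_of_le one_le_two ?_
    calc j + 2 ≤ (segList x.1 n₂).length := hn₂
      _ ≤ (segList x.1 (n + 1)).length := (segList_prefix_of_le x.1 (by omega)).length_le
      _ ≤ _ := length_segList_le_ncard hfin x n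
  rw [f.hullDot_of_bdd ⟨hbb, hba⟩]
  refine leanLevelGE_leanHull (f.widenedInf_lt_widenedSup hP ⟨hbb, hba⟩) ?_
  have h4 : (2 : ℝ) ^ (j + 2) = 4 * 2 ^ j := by ring
  rw [h4] at hwidth hmargin
  unfold widenedInf widenedSup
  calc (sSup (f.valuesThrough (x.1 n)) + P.margin (x.1 n) -
        (sInf (f.valuesThrough (x.1 n)) - P.margin (x.1 n))) * 2 ^ j
      = (sSup (f.valuesThrough (x.1 n)) - sInf (f.valuesThrough (x.1 n)) +
          2 * P.margin (x.1 n)) * 2 ^ j := by ring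
    _ ≤ (2 / (4 * 2 ^ j) + 2 * (1 / (4 * 2 ^ j))) * 2 ^ j := by gcongr
    _ = 1 := by field_simp; ring

noncomputable def hullMorphism (hP : P.AllDotsInhabited)
    (hfin : ∀ a : V, {b | P.refines a b}.Finite) : RefMorphism P SigPre where
  toFun := f.hullDot
  maps_points p hp := SigPre.isPoint_of_exists_leanLevelGE
    (fun n => f.hullDot_mono hP hfin (hp.mono n)) (f.exists_leanLevelGE_hullDot hP hfin ⟨p, hp⟩)
  reflects_apart p q hp hq := by
    rintro ⟨n, hn⟩
    by_contra! hpq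
    have heq := f.trailReal_eq_of_not_apart (x := ⟨p, hp⟩) (y := ⟨q, hq⟩) hpq
    exact not_rApart_of_rMem (heq ▸ f.rMem_hullDot ⟨p, hp⟩ n) (f.rMem_hullDot ⟨q, hq⟩ n) hn

end RefMorphism

/-- a trail morphism from a spraid `𝒱` to `σ_ℝ` is represented, up to
`≡_ℝ`, by a refinement morphism from `𝒱` to `σ_ℝ`. -/
theorem stmt16 {V : Type} (P : PreNaturalSpace V) (hP : P.IsNaturalSpace)
    (hsp : P.IsSpraid) (f : RefMorphism P.trailSpace SigPre) :
    ∃ g : RefMorphism P SigPre, ∀ x : P.Pt, ∃ t : P.trailSpace.Pt,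
      (∀ n, (t.1 n).1 = segList x.1 n) ∧
      SigPre.pEquiv (f.pointMap t) (g.pointMap x) := by
  obtain ⟨⟨-, -, hfin, -⟩, -⟩ := hsp
  refine ⟨f.hullMorphism hP.2 hfin, fun x => ⟨PreNaturalSpace.sharpPt x, fun n => rfl, ?_⟩⟩
  rintro ⟨n, hn⟩
  exact not_rApart_of_rMem (f.rMem_trailReal x n) (f.rMem_hullDot x n) hn
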